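/- arXiv:2312.10889 — 2 statements merged into one kernel-verified Lean document; each statement's English description precedes it below -/
import Mathlib

section
/- Let p be a positive integer and let a_1, a_2, a_3 be positive integers with gcd(a_1, a_2, a_3) = 1 such that p does not divide a_i for i = 1, 2, 3 (write a_i = p·k_i + t_i with 1 ≤ t_i ≤ p − 1). Let T_p = {(x_1, x_2, x_3) : 0 ≤ x_1, x_2, x_3 ≤ p − 1, p divides t_1·x_1 + t_2·x_2 + t_3·x_3, and t_1·x_1 + t_2·x_2 + t_3·x_3 ≠ 0}. Then the quotient ⟨a_1, a_2, a_3⟩/p equals the numerical semigroup generated by {a_1, a_2, a_3} together with the numbers (x_1·a_1 + x_2·a_2 + x_3·a_3)/p for (x_1, x_2, x_3) ∈ T_p. -/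
/-!
Write `p * m = ∑ xᵢ aᵢ` and split `xᵢ = p qᵢ + rᵢ` with `rᵢ < p`. Then `p` divides `∑ rᵢ aᵢ`, and
`m = ∑ qᵢ aᵢ + (∑ rᵢ aᵢ) / p`. Since `p ∤ aᵢ`, the residue part `∑ rᵢ (aᵢ % p)` vanishes only when
every `rᵢ = 0`; otherwise `(∑ rᵢ aᵢ) / p` is one of the extra generators. Conversely each generator
lies in the quotient, which is an additive submonoid.
-/

open Set

section

variable {ι : Type*} [Fintype ι] (a : ι → ℕ) (p : ℕ)

/-- The numbers `(∑ xᵢ aᵢ) / p` for the tuples `x` of the set `T_p`. -/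
def quotientGenerators : Set ℕ :=
  {s | ∃ x : ι → ℕ, (∀ i, x i < p) ∧ p ∣ ∑ i, a i % p * x i ∧ ∑ i, a i % p * x i ≠ 0 ∧
    s = (∑ i, x i * a i) / p}

variable {a p}

theorem mem_closure_range_iff_exists_sum_mul {n : ℕ} :
    n ∈ AddSubmonoid.closure (range a) ↔ ∃ x : ι → ℕ, n = ∑ i, x i * a i := by
  simp only [AddSubmonoid.mem_closure_range_iff_of_fintype, smul_eq_mul]

theorem dvd_sum_mul_iff_dvd_sum_mod_mul (x : ι → ℕ) :
    p ∣ ∑ i, x i * a i ↔ p ∣ ∑ i, a i % p * x i := by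
  simp only [← ZMod.natCast_eq_zero_iff, Nat.cast_sum, Nat.cast_mul, ZMod.natCast_mod, mul_comm]

theorem sum_mod_mul_eq_zero_iff (ha : ∀ i, ¬ p ∣ a i) {r : ι → ℕ} :
    ∑ i, a i % p * r i = 0 ↔ r = 0 := by
  have hmod (i : ι) : a i % p ≠ 0 := fun h ↦ ha i (Nat.dvd_of_mod_eq_zero h)
  simp [Finset.sum_eq_zero_iff, hmod, funext_iff]

theorem sum_mul_eq_mul_add_sum_mod_mul (x : ι → ℕ) :
    ∑ i, x i * a i = p * ∑ i, x i / p * a i + ∑ i, x i % p * a i := by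
  simp only [Finset.mul_sum, ← Finset.sum_add_distrib, ← mul_assoc, ← add_mul, Nat.div_add_mod]

theorem mem_closure_quotientGenerators_of_mul_eq (hp : 0 < p) (ha : ∀ i, ¬ p ∣ a i)
    {m : ℕ} (x : ι → ℕ) (hm : p * m = ∑ i, x i * a i) :
    m ∈ AddSubmonoid.closure (range a ∪ quotientGenerators a p) := by
  rw [sum_mul_eq_mul_add_sum_mod_mul (p := p)] at hm
  set r : ι → ℕ := fun i ↦ x i % p
  have hdvd : p ∣ ∑ i, r i * a i :=
    (Nat.dvd_add_right (dvd_mul_right _ _)).mp (hm ▸ dvd_mul_right p m)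
  have hm' : m = ∑ i, x i / p * a i + (∑ i, r i * a i) / p := by
    refine Nat.eq_of_mul_eq_mul_left hp ?_
    rw [hm, mul_add, Nat.mul_div_cancel' hdvd]
  rw [hm']
  refine add_mem (AddSubmonoid.closure_mono subset_union_left
    (mem_closure_range_iff_exists_sum_mul.mpr ⟨_, rfl⟩)) ?_
  by_cases hr : ∑ i, a i % p * r i = 0
  · simp [(sum_mod_mul_eq_zero_iff ha).mp hr]
  · exact AddSubmonoid.subset_closure <| Or.inr
      ⟨r, fun i ↦ Nat.mod_lt _ hp, (dvd_sum_mul_iff_dvd_sum_mod_mul r).mp hdvd, hr, rfl⟩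

theorem quotientGenerators_subset_comap_mulLeft :
    quotientGenerators a p ⊆ (AddSubmonoid.closure (range a)).comap (AddMonoidHom.mulLeft p) := by
  rintro _ ⟨x, -, hdvd, -, rfl⟩
  change p * _ ∈ AddSubmonoid.closure (range a)
  rw [Nat.mul_div_cancel' ((dvd_sum_mul_iff_dvd_sum_mod_mul x).mpr hdvd)]
  exact mem_closure_range_iff_exists_sum_mul.mpr ⟨x, rfl⟩

theorem comap_mulLeft_closure_range (hp : 0 < p) (ha : ∀ i, ¬ p ∣ a i) :
    (AddSubmonoid.closure (range a)).comap (AddMonoidHom.mulLeft p) =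
      AddSubmonoid.closure (range a ∪ quotientGenerators a p) := by
  refine le_antisymm (fun m hm ↦ ?_) (AddSubmonoid.closure_le.mpr (union_subset ?_
    quotientGenerators_subset_comap_mulLeft))
  · obtain ⟨x, hx⟩ := mem_closure_range_iff_exists_sum_mul.mp hm
    exact mem_closure_quotientGenerators_of_mul_eq hp ha x hx
  · rintro _ ⟨i, rfl⟩
    simpa using nsmul_mem (AddSubmonoid.subset_closure (mem_range_self (f := a) i)) p

end

theorem quotient_numerical_semigroup_three_generators_general
    (p a₁ a₂ a₃ : ℕ) (hp : 0 < p)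
    (hnd₁ : ¬ p ∣ a₁) (hnd₂ : ¬ p ∣ a₂) (hnd₃ : ¬ p ∣ a₃) :
    {m : ℕ | p * m ∈ AddSubmonoid.closure ({a₁, a₂, a₃} : Set ℕ)} =
      ↑(AddSubmonoid.closure
        ({a₁, a₂, a₃} ∪
          {s : ℕ | ∃ x₁ x₂ x₃ : ℕ, x₁ ≤ p - 1 ∧ x₂ ≤ p - 1 ∧ x₃ ≤ p - 1 ∧
            p ∣ ((a₁ % p) * x₁ + (a₂ % p) * x₂ + (a₃ % p) * x₃) ∧
            (a₁ % p) * x₁ + (a₂ % p) * x₂ + (a₃ % p) * x₃ ≠ 0 ∧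
            s = (x₁ * a₁ + x₂ * a₂ + x₃ * a₃) / p})) := by
  have hrange : range ![a₁, a₂, a₃] = {a₁, a₂, a₃} := by
    ext; simp [or_comm, or_left_comm, eq_comm]
  have hgens : quotientGenerators ![a₁, a₂, a₃] p = {s : ℕ | ∃ x₁ x₂ x₃ : ℕ,
      x₁ ≤ p - 1 ∧ x₂ ≤ p - 1 ∧ x₃ ≤ p - 1 ∧
      p ∣ ((a₁ % p) * x₁ + (a₂ % p) * x₂ + (a₃ % p) * x₃) ∧
      (a₁ % p) * x₁ + (a₂ % p) * x₂ + (a₃ % p) * x₃ ≠ 0 ∧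
      s = (x₁ * a₁ + x₂ * a₂ + x₃ * a₃) / p} := by
    have hlt (x : ℕ) : x < p ↔ x ≤ p - 1 := by omega
    ext s
    simp only [quotientGenerators, Fin.sum_univ_three, Fin.forall_fin_succ, IsEmpty.forall_iff,
      Matrix.cons_val_zero, Matrix.cons_val_one, Matrix.cons_val_two, mem_ofPred_eq, hlt]
    constructor
    · rintro ⟨x, ⟨h₀, h₁, h₂, -⟩, h⟩
      exact ⟨x 0, x 1, x 2, h₀, h₁, h₂, h⟩
    · rintro ⟨x₁, x₂, x₃, h⟩
      exact ⟨![x₁, x₂, x₃], by simpa [and_assoc] using h⟩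
  have hnd : ∀ i, ¬ p ∣ ![a₁, a₂, a₃] i := by simp [Fin.forall_fin_succ, *]
  rw [← hrange, ← hgens, ← comap_mulLeft_closure_range hp hnd]
  rfl

/-- The quotient `⟨a₁,a₂,a₃⟩/p` for `p ∤ aᵢ` (with `tᵢ = aᵢ % p`) is generated by
`a₁, a₂, a₃` together with `(x₁a₁+x₂a₂+x₃a₃)/p` for `(x₁,x₂,x₃) ∈ T_p`. -/
theorem quotient_numerical_semigroup_three_generators
    (p a₁ a₂ a₃ : ℕ) (hp : 0 < p) (h₁ : 0 < a₁) (h₂ : 0 < a₂) (h₃ : 0 < a₃)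
    (hgcd : Nat.gcd a₁ (Nat.gcd a₂ a₃) = 1)
    (hnd₁ : ¬ p ∣ a₁) (hnd₂ : ¬ p ∣ a₂) (hnd₃ : ¬ p ∣ a₃) :
    {m : ℕ | p * m ∈ AddSubmonoid.closure ({a₁, a₂, a₃} : Set ℕ)} =
      ↑(AddSubmonoid.closure
        ({a₁, a₂, a₃} ∪
          {s : ℕ | ∃ x₁ x₂ x₃ : ℕ, x₁ ≤ p - 1 ∧ x₂ ≤ p - 1 ∧ x₃ ≤ p - 1 ∧
            p ∣ ((a₁ % p) * x₁ + (a₂ % p) * x₂ + (a₃ % p) * x₃) ∧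
            (a₁ % p) * x₁ + (a₂ % p) * x₂ + (a₃ % p) * x₃ ≠ 0 ∧
            s = (x₁ * a₁ + x₂ * a₂ + x₃ * a₃) / p})) :=
  quotient_numerical_semigroup_three_generators_general p a₁ a₂ a₃ hp hnd₁ hnd₂ hnd₃
end

section
/- Let a_1, a_2, a_3 be positive integers with gcd(a_1, a_2, a_3) = 1 such that a_1 is even and a_2, a_3 are odd. Then the quotient ⟨a_1, a_2, a_3⟩/2 equals the numerical semigroup generated by a_1/2, a_2, a_3, and (a_2 + a_3)/2. -/
/-!
If `2m = x a₁ + y a₂ + z a₃` with `a₁` even and `a₂, a₃` odd, then `y` and `z` have the same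
parity `r`, so `m = x (a₁/2) + ⌊y/2⌋ a₂ + ⌊z/2⌋ a₃ + r (a₂+a₃)/2`. Conversely, twice each of the
four generators `a₁/2, a₂, a₃, (a₂+a₃)/2` lies in `⟨a₁, a₂, a₃⟩`.
-/

theorem AddSubmonoid.mem_closure_triple {M : Type*} [AddCommMonoid M] {a b c x : M} :
    x ∈ closure ({a, b, c} : Set M) ↔ ∃ i j k : ℕ, i • a + j • b + k • c = x := by
  rw [← Set.singleton_union, closure_union, mem_sup]
  simp_rw [mem_closure_singleton, mem_closure_pair, exists_exists_eq_and]
  constructor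
  · rintro ⟨i, _, ⟨j, k, rfl⟩, rfl⟩
    exact ⟨i, j, k, add_assoc _ _ _⟩
  · rintro ⟨i, j, k, rfl⟩
    exact ⟨i, _, ⟨j, k, rfl⟩, (add_assoc _ _ _).symm⟩

theorem Nat.mod_two_eq_of_even_mul_add_mul {a b y z : ℕ} (ha : Odd a) (hb : Odd b)
    (h : Even (y * a + z * b)) : y % 2 = z % 2 := by
  rw [Nat.even_add, Nat.even_mul, Nat.even_mul, iff_false_intro (Nat.not_even_iff_odd.2 ha),
    iff_false_intro (Nat.not_even_iff_odd.2 hb), or_false, or_false, Nat.even_iff,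
    Nat.even_iff] at h
  omega

theorem Nat.two_mul_mem_closure_of_mem_closure {k a b s m : ℕ} (hs : a + b = s + s)
    (hm : m ∈ AddSubmonoid.closure {k, a, b, s}) :
    2 * m ∈ AddSubmonoid.closure {k + k, a, b} := by
  have hk : k + k ∈ AddSubmonoid.closure {k + k, a, b} := AddSubmonoid.subset_closure (by simp)
  have ha : a ∈ AddSubmonoid.closure {k + k, a, b} := AddSubmonoid.subset_closure (by simp)
  have hb : b ∈ AddSubmonoid.closure {k + k, a, b} := AddSubmonoid.subset_closure (by simp)
  suffices AddSubmonoid.closure {k, a, b, s} ≤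
      (AddSubmonoid.closure {k + k, a, b}).comap (AddMonoidHom.mulLeft 2) from this hm
  rw [AddSubmonoid.closure_le]
  simp only [Set.insert_subset_iff, Set.singleton_subset_iff, SetLike.mem_coe,
    AddSubmonoid.mem_comap, AddMonoidHom.coe_mulLeft, two_mul, ← hs]
  exact ⟨hk, add_mem ha ha, add_mem hb hb, add_mem ha hb⟩

theorem Nat.mem_closure_of_two_mul_mem_closure {k a b s m : ℕ} (ha : Odd a) (hb : Odd b)
    (hs : a + b = s + s) (hm : 2 * m ∈ AddSubmonoid.closure {k + k, a, b}) :
    m ∈ AddSubmonoid.closure {k, a, b, s} := by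
  obtain ⟨x, y, z, h⟩ := AddSubmonoid.mem_closure_triple.1 hm
  simp only [smul_eq_mul, mul_add] at h
  have hyz : y % 2 = z % 2 :=
    Nat.mod_two_eq_of_even_mul_add_mul ha hb ⟨m - x * k, by omega⟩
  obtain ⟨u, v, r, rfl, rfl⟩ : ∃ u v r, y = 2 * u + r ∧ z = 2 * v + r :=
    ⟨y / 2, z / 2, y % 2, by omega, by omega⟩
  have hm' : m = x * k + u * a + v * b + r * s := by
    have hr : r * (a + b) = r * (s + s) := by rw [hs]
    linarith
  rw [hm']
  refine add_mem (add_mem (add_mem ?_ ?_) ?_) ?_ <;>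
    · apply AddSubmonoid.nsmul_mem
      apply AddSubmonoid.subset_closure
      simp

theorem quotient_two_eoo_general
    (a₁ a₂ a₃ : ℕ)
    (he₁ : Even a₁) (ho₂ : Odd a₂) (ho₃ : Odd a₃) :
    {m : ℕ | 2 * m ∈ AddSubmonoid.closure ({a₁, a₂, a₃} : Set ℕ)} =
      ↑(AddSubmonoid.closure ({a₁ / 2, a₂, a₃, (a₂ + a₃) / 2} : Set ℕ)) := by
  obtain ⟨k, rfl⟩ := he₁
  obtain ⟨s, hs⟩ := ho₂.add_odd ho₃
  rw [hs, show (k + k) / 2 = k by omega, show (s + s) / 2 = s by omega]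
  ext m
  exact ⟨Nat.mem_closure_of_two_mul_mem_closure ho₂ ho₃ hs,
    Nat.two_mul_mem_closure_of_mem_closure hs⟩

/-- Table 1, row (p,t₁,t₂,t₃) = (2,0,1,1): for `a₁` even and `a₂, a₃` odd with gcd 1,
`⟨a₁, a₂, a₃⟩/2 = ⟨a₁/2, a₂, a₃, (a₂+a₃)/2⟩`. -/
theorem quotient_two_eoo
    (a₁ a₂ a₃ : ℕ) (h₁ : 0 < a₁) (h₂ : 0 < a₂) (h₃ : 0 < a₃)
    (hgcd : Nat.gcd a₁ (Nat.gcd a₂ a₃) = 1)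
    (he₁ : Even a₁) (ho₂ : Odd a₂) (ho₃ : Odd a₃) :
    {m : ℕ | 2 * m ∈ AddSubmonoid.closure ({a₁, a₂, a₃} : Set ℕ)} =
      ↑(AddSubmonoid.closure ({a₁ / 2, a₂, a₃, (a₂ + a₃) / 2} : Set ℕ)) :=
  quotient_two_eoo_general a₁ a₂ a₃ he₁ ho₂ ho₃
end
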